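/- For integers n ≥ 0 and 0 ≤ i ≤ n, let s^i t^{2n-2i} evaluated at the unit ball be defined as C(2n-2i, n-i). Then ∑_{i=0}^{⌊n/2⌋} (-1)^i · C(n-i, i) · C(2n-2i, n-i) = (-1)^n · (-2)^n, so the evaluation t^n·p_n(B(ℂ^n)) := (-1)^n ∑_{i=0}^{⌊n/2⌋} (-1)^i C(n-i,i) C(2n-2i,n-i) equals (-1)^n · 2^n; in particular it is nonzero. -/
import Mathlib

private def g (n i : ℕ) : ℕ := (n - i).choose i * (2 * n - 2 * i).choose (n - i)

private lemma g_eq_zero {n i : ℕ} (h : n < 2 * i) : g n i = 0 := by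
  have h1 : n - i < i := by omega
  simp [g, Nat.choose_eq_zero_of_lt h1]

private lemma cert (n i : ℕ) :
    n * g n i = 2 * n * g (n - 1) i + 2 * i * g n i + 2 * (i + 1) * g n (i + 1) := by
  rcases Nat.lt_or_ge n (2 * i) with h | h
  · rw [g_eq_zero h, g_eq_zero (show n - 1 < 2 * i by omega),
      g_eq_zero (show n < 2 * (i + 1) by omega)]
    ring
  rcases Nat.eq_zero_or_pos n with rfl | hn
  · have hi : i = 0 := by omega
    subst hi
    simp [g]
  -- main case: n = b + 1 + i with i ≤ b + 1
  obtain ⟨b, rfl⟩ : ∃ b, n = b + 1 + i := ⟨n - i - 1, by omega⟩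
  have e1 : b + 1 + i - i = b + 1 := by omega
  have e2 : 2 * (b + 1 + i) - 2 * i = 2 * b + 2 := by omega
  have e3 : b + 1 + i - 1 - i = b := by omega
  have e4 : 2 * (b + 1 + i - 1) - 2 * i = 2 * b := by omega
  have e5 : b + 1 + i - (i + 1) = b := by omega
  have e6 : 2 * (b + 1 + i) - 2 * (i + 1) = 2 * b := by omega
  simp only [g, e1, e2, e3, e4, e5, e6]
  -- fact 1 : (b+1) * (2b+2).choose (b+1) = 2 * (2b+1) * (2b).choose b
  have hsym : (2 * b + 1).choose b = (2 * b + 1).choose (b + 1) := by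
    have := Nat.choose_symm (show b + 1 ≤ 2 * b + 1 by omega)
    rwa [show 2 * b + 1 - (b + 1) = b by omega] at this
  have hsplit : (2 * b + 2).choose (b + 1)
      = (2 * b + 1).choose b + (2 * b + 1).choose (b + 1) :=
    Nat.choose_succ_succ (2 * b + 1) b
  have hm : (2 * b + 1) * (2 * b).choose b = (2 * b + 1).choose (b + 1) * (b + 1) := by
    simpa [Nat.succ_eq_add_one] using Nat.add_one_mul_choose_eq (2 * b) b
  have f1 : (b + 1) * (2 * b + 2).choose (b + 1)
      = 2 * (2 * b + 1) * (2 * b).choose b := by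
    rw [hsplit, ← hsym]
    calc (b + 1) * ((2 * b + 1).choose b + (2 * b + 1).choose b)
        = 2 * ((2 * b + 1).choose b * (b + 1)) := by ring
      _ = 2 * ((2 * b + 1).choose (b + 1) * (b + 1)) := by rw [hsym]
      _ = 2 * ((2 * b + 1) * (2 * b).choose b) := by rw [← hm]
      _ = 2 * (2 * b + 1) * (2 * b).choose b := by ring
  rcases Nat.lt_or_ge b i with hbi | hbi
  · -- i = b + 1 (since i ≤ b + 1 from h)
    have hib : i = b + 1 := by omega
    subst hib
    have hB0 : b.choose (b + 1) = 0 := Nat.choose_eq_zero_of_lt (by omega)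
    have hD0 : b.choose (b + 1 + 1) = 0 := Nat.choose_eq_zero_of_lt (by omega)
    rw [hB0, hD0]
    ring
  · -- i ≤ b : write b = i + c
    obtain ⟨c, rfl⟩ : ∃ c, b = i + c := ⟨b - i, by omega⟩
    have f2 : (i + c).choose i * (i + c + 1) = (i + c + 1).choose i * (c + 1) := by
      have := Nat.choose_mul_succ_eq (i + c) i
      rwa [show i + c + 1 - i = c + 1 by omega] at this
    have f3 : (i + c).choose (i + 1) * (i + 1) = (i + c).choose i * c := by
      have := Nat.choose_succ_right_eq (i + c) i
      rwa [show i + c - i = c by omega] at this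
    zify at f1 f2 f3 ⊢
    linear_combination (-((2 * (i + c) + 2).choose (i + c + 1) : ℤ)) * f2
      + ((i + c).choose i : ℤ) * f1 - 2 * ((2 * (i + c)).choose (i + c) : ℤ) * f3

private def T (n : ℕ) : ℤ := ∑ i ∈ Finset.range (n + 1), (-1 : ℤ) ^ i * g n i

private lemma T_succ (m : ℕ) : T (m + 1) = 2 * T m := by
  have termwise : ∀ i ∈ Finset.range (m + 2),
      ((m : ℤ) + 1) * ((-1 : ℤ) ^ i * g (m + 1) i)
        - 2 * ((m : ℤ) + 1) * ((-1 : ℤ) ^ i * g m i)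
      = (fun j => (-2 : ℤ) * j * (-1) ^ j * g (m + 1) j) (i + 1)
        - (fun j => (-2 : ℤ) * j * (-1) ^ j * g (m + 1) j) i := by
    intro i _
    have hc := cert (m + 1) i
    rw [show m + 1 - 1 = m by omega] at hc
    have hcz : ((m : ℤ) + 1) * (g (m + 1) i : ℤ)
        = 2 * ((m : ℤ) + 1) * (g m i : ℤ) + 2 * i * (g (m + 1) i : ℤ)
          + 2 * (i + 1) * (g (m + 1) (i + 1) : ℤ) := by exact_mod_cast hc
    simp only []
    push_cast
    linear_combination ((-1 : ℤ) ^ i) * hcz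
  have tele : ∑ i ∈ Finset.range (m + 2),
      ((fun j => (-2 : ℤ) * j * (-1) ^ j * g (m + 1) j) (i + 1)
        - (fun j => (-2 : ℤ) * j * (-1) ^ j * g (m + 1) j) i) = 0 := by
    rw [Finset.sum_range_sub (fun j => (-2 : ℤ) * j * (-1) ^ j * g (m + 1) j)]
    have hz : g (m + 1) (m + 2) = 0 := g_eq_zero (by omega)
    simp [hz]
  have h1 : ∑ i ∈ Finset.range (m + 2),
      (((m : ℤ) + 1) * ((-1 : ℤ) ^ i * g (m + 1) i)
        - 2 * ((m : ℤ) + 1) * ((-1 : ℤ) ^ i * g m i)) = 0 := by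
    rw [Finset.sum_congr rfl termwise]; exact tele
  rw [Finset.sum_sub_distrib, ← Finset.mul_sum, ← Finset.mul_sum, sub_eq_zero] at h1
  have h2 : ∑ i ∈ Finset.range (m + 2), (-1 : ℤ) ^ i * g m i = T m := by
    rw [Finset.sum_range_succ]
    have hz : g m (m + 1) = 0 := g_eq_zero (by omega)
    simp [hz, T]
  rw [h2] at h1
  have hne : ((m : ℤ) + 1) ≠ 0 := by positivity
  have : ((m : ℤ) + 1) * T (m + 1) = ((m : ℤ) + 1) * (2 * T m) := by
    rw [show T (m + 1) = ∑ i ∈ Finset.range (m + 2), (-1 : ℤ) ^ i * g (m + 1) i from rfl]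
    rw [h1]; ring
  exact mul_left_cancel₀ hne this

private lemma T_eq (n : ℕ) : T n = 2 ^ n := by
  induction n with
  | zero => simp [T, g]
  | succ m ih => rw [T_succ, ih]; ring

/-- The evaluation `t^n·p_n(B(ℂ^n)) = (-1)^n ∑_{i=0}^{⌊n/2⌋} (-1)^i C(n-i,i) C(2n-2i,n-i)`
(using Fu's formula `s^i t^{2n-2i}(B(ℂ^n)) = C(2n-2i,n-i)`) equals `(-1)^n·2^n`;
equivalently the sum equals `(-1)^n·(-2)^n`, and in particular the evaluation is
nonzero. -/
theorem tn_pn_ball_eval (n : ℕ) :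
    (∑ i ∈ Finset.range (n / 2 + 1),
        (-1 : ℤ) ^ i * ((n - i).choose i) * ((2 * n - 2 * i).choose (n - i)))
      = (-1 : ℤ) ^ n * (-2) ^ n
    ∧ (-1 : ℤ) ^ n *
        (∑ i ∈ Finset.range (n / 2 + 1),
          (-1 : ℤ) ^ i * ((n - i).choose i) * ((2 * n - 2 * i).choose (n - i)))
      = (-1 : ℤ) ^ n * 2 ^ n
    ∧ (-1 : ℤ) ^ n *
        (∑ i ∈ Finset.range (n / 2 + 1),
          (-1 : ℤ) ^ i * ((n - i).choose i) * ((2 * n - 2 * i).choose (n - i))) ≠ 0 := by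
  have hsum : (∑ i ∈ Finset.range (n / 2 + 1),
      (-1 : ℤ) ^ i * ((n - i).choose i) * ((2 * n - 2 * i).choose (n - i))) = 2 ^ n := by
    have hext : (∑ i ∈ Finset.range (n / 2 + 1),
        (-1 : ℤ) ^ i * ((n - i).choose i) * ((2 * n - 2 * i).choose (n - i)))
        = ∑ i ∈ Finset.range (n + 1),
        (-1 : ℤ) ^ i * ((n - i).choose i) * ((2 * n - 2 * i).choose (n - i)) := by
      apply Finset.sum_subset
      · intro x hx
        simp only [Finset.mem_range] at hx ⊢
        omega
      · intro x _ hx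
        simp only [Finset.mem_range, not_lt] at hx
        have : n - x < x := by omega
        simp [Nat.choose_eq_zero_of_lt this]
    have : (∑ i ∈ Finset.range (n + 1),
        (-1 : ℤ) ^ i * ((n - i).choose i) * ((2 * n - 2 * i).choose (n - i))) = T n := by
      apply Finset.sum_congr rfl
      intro i _
      simp [T, g]
      ring
    rw [hext, this, T_eq]
  have hpow : ((-1 : ℤ)) ^ n * (-2) ^ n = 2 ^ n := by
    rw [← mul_pow]; norm_num
  refine ⟨by rw [hsum, ← hpow], by rw [hsum], ?_⟩
  rw [hsum]
  intro h
  have : ((-1 : ℤ)) ^ n ≠ 0 := by positivity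
  have h2 : (2 : ℤ) ^ n ≠ 0 := by positivity
  exact (mul_ne_zero this h2) h
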